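/- arXiv:1609.02879 — 3 statements merged into one kernel-verified Lean document; each statement's English description precedes it below -/
import Mathlib

section
/- Let P be a polynomial of degree p ≥ 1 over a real closed field R. If θ₁ and θ₂ are real roots of P such that the sign of P^{(k)}(θ₁) equals the sign of P^{(k)}(θ₂) for every k with 1 ≤ k ≤ p−1, then θ₁ = θ₂. (Uniqueness of Thom encodings.) -/
/-- The sign of a real number as an integer. -/
noncomputable def sgn (a : ℝ) : ℤ := if a < 0 then -1 else if a = 0 then 0 else 1

lemma sgn_zero_iff {a : ℝ} : sgn a = 0 ↔ a = 0 := by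
  unfold sgn; split_ifs with h1 h2 <;> simp_all <;> linarith

lemma sgn_pos_iff {a : ℝ} : sgn a = 1 ↔ 0 < a := by
  unfold sgn; split_ifs with h1 h2 <;> simp_all <;> [linarith; exact lt_of_le_of_ne h1 (Ne.symm h2)]

lemma sgn_neg_iff {a : ℝ} : sgn a = -1 ↔ a < 0 := by
  unfold sgn; split_ifs with h1 h2 <;> simp_all

lemma eval_congr_of_natDegree_zero {Q : Polynomial ℝ} (h : Q.natDegree = 0) (x y : ℝ) :
    Q.eval x = Q.eval y := by
  rw [Polynomial.eq_C_of_natDegree_eq_zero h]; simp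

/-- Thom's lemma: if all iterated derivatives of `P` have the same sign at `c` and `d`,
then they all have the same sign on the whole interval `[c, d]`. -/
lemma thom_aux : ∀ (n : ℕ) (P : Polynomial ℝ), P.natDegree ≤ n → ∀ c d : ℝ, c ≤ d →
    (∀ k, sgn ((Polynomial.derivative^[k] P).eval c) = sgn ((Polynomial.derivative^[k] P).eval d)) →
    ∀ x ∈ Set.Icc c d, ∀ k,
      sgn ((Polynomial.derivative^[k] P).eval x) = sgn ((Polynomial.derivative^[k] P).eval c) := by
  intro n
  induction n with
  | zero =>
    intro P hP c d _ _ x _ k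
    have h0 : (Polynomial.derivative^[k] P).natDegree = 0 := by
      have := Polynomial.natDegree_iterate_derivative P k
      omega
    rw [eval_congr_of_natDegree_zero h0 x c]
  | succ n ih =>
    intro P hP c d hcd hs x hx k
    have hd : (Polynomial.derivative P).natDegree ≤ n := by
      have := Polynomial.natDegree_derivative_le P
      omega
    have ih' := ih (Polynomial.derivative P) hd c d hcd (fun k => by
      simpa [Function.iterate_succ_apply] using hs (k + 1))
    match k with
    | k + 1 =>
      simpa [Function.iterate_succ_apply] using ih' x hx k
    | 0 =>
      simp only [Function.iterate_zero, id_eq] at *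
      -- sign of P' is constant on [c,d]
      have hder : ∀ y ∈ Set.Icc c d,
          sgn ((Polynomial.derivative P).eval y) = sgn ((Polynomial.derivative P).eval c) := by
        intro y hy
        simpa using ih' y hy 0
      have hPcd : sgn (P.eval c) = sgn (P.eval d) := by simpa using hs 0
      rcases lt_trichotomy ((Polynomial.derivative P).eval c) 0 with h | h | h
      · -- P' < 0 on [c,d] : P strictly antitone
        have hneg : ∀ y ∈ Set.Icc c d, (Polynomial.derivative P).eval y < 0 := by
          intro y hy
          have := (hder y hy).trans (sgn_neg_iff.2 h)
          exact sgn_neg_iff.1 this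
        have hanti : StrictAntiOn (fun y => P.eval y) (Set.Icc c d) := by
          apply strictAntiOn_of_deriv_neg (convex_Icc c d) (P.continuous.continuousOn)
          intro y hy
          rw [interior_Icc] at hy
          rw [Polynomial.deriv]
          exact hneg y (Set.Ioo_subset_Icc_self hy)
        have hcm : c ∈ Set.Icc c d := Set.left_mem_Icc.2 hcd
        have hdm : d ∈ Set.Icc c d := Set.right_mem_Icc.2 hcd
        have hxc : P.eval x ≤ P.eval c := hanti.antitoneOn hcm hx hx.1
        have hxd : P.eval d ≤ P.eval x := hanti.antitoneOn hx hdm hx.2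
        rcases lt_trichotomy (P.eval c) 0 with hc | hc | hc
        · rw [sgn_neg_iff.2 hc, sgn_neg_iff.2 (lt_of_le_of_lt hxc hc)]
        · have hdz : P.eval d = 0 := sgn_zero_iff.1 (hPcd.symm.trans (sgn_zero_iff.2 hc))
          rcases eq_or_lt_of_le hcd with rfl | hlt
          · have : x = c := le_antisymm hx.2 hx.1
            rw [this]
          · exact absurd (hanti hcm hdm hlt) (by simp [hc, hdz])
        · have hdpos : 0 < P.eval d := sgn_pos_iff.1 (hPcd.symm.trans (sgn_pos_iff.2 hc))
          rw [sgn_pos_iff.2 hc, sgn_pos_iff.2 (lt_of_lt_of_le hdpos hxd)]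
      · -- P' = 0 on [c,d]
        rcases eq_or_lt_of_le hcd with rfl | hlt
        · have : x = c := le_antisymm hx.2 hx.1
          rw [this]
        · have hzero : ∀ y ∈ Set.Icc c d, (Polynomial.derivative P).eval y = 0 := by
            intro y hy
            exact sgn_zero_iff.1 ((hder y hy).trans (sgn_zero_iff.2 h))
          have hD : Polynomial.derivative P = 0 := by
            apply Polynomial.eq_zero_of_infinite_isRoot
            apply Set.Infinite.mono (fun y hy => hzero y hy)
            exact Set.infinite_coe_iff.1 (Set.Icc.infinite hlt)
          have hP0 : P.natDegree = 0 := Polynomial.natDegree_eq_zero_of_derivative_eq_zero hD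
          rw [eval_congr_of_natDegree_zero hP0 x c]
      · -- P' > 0 on [c,d] : P strictly monotone
        have hpos : ∀ y ∈ Set.Icc c d, 0 < (Polynomial.derivative P).eval y := by
          intro y hy
          have := (hder y hy).trans (sgn_pos_iff.2 h)
          exact sgn_pos_iff.1 this
        have hmono : StrictMonoOn (fun y => P.eval y) (Set.Icc c d) := by
          apply strictMonoOn_of_deriv_pos (convex_Icc c d) (P.continuous.continuousOn)
          intro y hy
          rw [interior_Icc] at hy
          rw [Polynomial.deriv]
          exact hpos y (Set.Ioo_subset_Icc_self hy)
        have hcm : c ∈ Set.Icc c d := Set.left_mem_Icc.2 hcd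
        have hdm : d ∈ Set.Icc c d := Set.right_mem_Icc.2 hcd
        have hxc : P.eval c ≤ P.eval x := hmono.monotoneOn hcm hx hx.1
        have hxd : P.eval x ≤ P.eval d := hmono.monotoneOn hx hdm hx.2
        rcases lt_trichotomy (P.eval c) 0 with hc | hc | hc
        · have hdneg : P.eval d < 0 := sgn_neg_iff.1 (hPcd.symm.trans (sgn_neg_iff.2 hc))
          rw [sgn_neg_iff.2 hc, sgn_neg_iff.2 (lt_of_le_of_lt hxd hdneg)]
        · have hdz : P.eval d = 0 := sgn_zero_iff.1 (hPcd.symm.trans (sgn_zero_iff.2 hc))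
          rcases eq_or_lt_of_le hcd with rfl | hlt
          · have : x = c := le_antisymm hx.2 hx.1
            rw [this]
          · exact absurd (hmono hcm hdm hlt) (by simp [hc, hdz])
        · rw [sgn_pos_iff.2 hc, sgn_pos_iff.2 (lt_of_lt_of_le hc hxc)]

lemma thom_main (P : Polynomial ℝ) (p : ℕ) (hdeg : P.natDegree = p) (hp : 1 ≤ p)
    (c d : ℝ) (hcd : c ≤ d) (h₁ : P.eval c = 0) (h₂ : P.eval d = 0)
    (hsign : ∀ k, 1 ≤ k → k ≤ p - 1 →
      sgn ((Polynomial.derivative^[k] P).eval c) = sgn ((Polynomial.derivative^[k] P).eval d)) :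
    c = d := by
  rcases eq_or_lt_of_le hcd with h | hlt
  · exact h
  have hs : ∀ k, sgn ((Polynomial.derivative^[k] P).eval c)
      = sgn ((Polynomial.derivative^[k] P).eval d) := by
    intro k
    rcases Nat.eq_zero_or_pos k with rfl | hk
    · simp [h₁, h₂]
    rcases le_or_gt k (p - 1) with hle | hgt
    · exact hsign k hk hle
    · have h0 : (Polynomial.derivative^[k] P).natDegree = 0 := by
        have := Polynomial.natDegree_iterate_derivative P k
        omega
      rw [eval_congr_of_natDegree_zero h0 c d]
  have hall := thom_aux P.natDegree P le_rfl c d hcd hs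
  have hzero : ∀ x ∈ Set.Icc c d, P.eval x = 0 := by
    intro x hx
    have := hall x hx 0
    simp only [Function.iterate_zero, id_eq] at this
    rw [h₁] at this
    exact sgn_zero_iff.1 (this.trans (sgn_zero_iff.2 rfl))
  have hP0 : P = 0 := by
    apply Polynomial.eq_zero_of_infinite_isRoot
    apply Set.Infinite.mono (fun y hy => hzero y hy)
    exact Set.infinite_coe_iff.1 (Set.Icc.infinite hlt)
  rw [hP0] at hdeg
  simp at hdeg
  omega

/-- Uniqueness of Thom encodings: if two real roots of a polynomial `P` of degree `p ≥ 1` have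
the same signs of the derivatives `P^{(k)}` for `1 ≤ k ≤ p - 1`, then they are equal. -/
theorem thom_encoding_unique (P : Polynomial ℝ) (p : ℕ) (hdeg : P.natDegree = p) (hp : 1 ≤ p)
    (θ₁ θ₂ : ℝ) (h₁ : P.eval θ₁ = 0) (h₂ : P.eval θ₂ = 0)
    (hsign : ∀ k, 1 ≤ k → k ≤ p - 1 →
      sgn ((Polynomial.derivative^[k] P).eval θ₁) = sgn ((Polynomial.derivative^[k] P).eval θ₂)) :
    θ₁ = θ₂ := by
  rcases le_total θ₁ θ₂ with h | h
  · exact thom_main P p hdeg hp θ₁ θ₂ h h₁ h₂ hsign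
  · exact (thom_main P p hdeg hp θ₂ θ₁ h h₂ h₁
      (fun k hk hk' => (hsign k hk hk').symm)).symm
end

section
/- The relation ≺_P on sign vectors defined by: η₁ ≺_P η₂ iff η₁ ≠ η₂ and, with q the largest index where they differ, either (η₁(q) < η₂(q) and η₁(q+1) = 1) or (η₁(q) > η₂(q) and η₁(q+1) = −1), is a strict partial order on {−1,0,1}^{0,…,p} restricted to vectors with fixed p-th coordinate; that is, it is irreflexive and transitive. -/
/-- The relation `≺_P` on sign vectors indexed by `{0, …, p}`: `η₁ ≺ η₂` iff `η₁ ≠ η₂` and, with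
`q` the largest index where they differ (necessarily `q < p` since the `p`-th coordinates are
fixed), either (`η₁ q < η₂ q` and `η₁ (q+1) = 1`) or (`η₁ q > η₂ q` and `η₁ (q+1) = -1`). -/
def prec (p : ℕ) (η₁ η₂ : ℕ → ℤ) : Prop :=
  ∃ q, q < p ∧ η₁ q ≠ η₂ q ∧ (∀ k, q < k → k ≤ p → η₁ k = η₂ k) ∧
    ((η₁ q < η₂ q ∧ η₁ (q + 1) = 1) ∨ (η₂ q < η₁ q ∧ η₁ (q + 1) = -1))

/-- `≺_P` is a strict partial order (irreflexive and transitive) on sign vectors in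
`{-1,0,1}^{0,…,p}` with fixed `p`-th coordinate `c`. -/
theorem prec_strict_partial_order (p : ℕ) (c : ℤ) :
    (∀ η : ℕ → ℤ, ¬ prec p η η) ∧
    (∀ η₁ η₂ η₃ : ℕ → ℤ,
      (∀ k ≤ p, η₁ k ∈ ({-1, 0, 1} : Set ℤ)) →
      (∀ k ≤ p, η₂ k ∈ ({-1, 0, 1} : Set ℤ)) →
      (∀ k ≤ p, η₃ k ∈ ({-1, 0, 1} : Set ℤ)) →
      η₁ p = c → η₂ p = c → η₃ p = c →
      prec p η₁ η₂ → prec p η₂ η₃ → prec p η₁ η₃) := by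
  constructor
  · rintro η ⟨q, -, hne, -⟩
    exact hne rfl
  · rintro η₁ η₂ η₃ - - - - - - ⟨q₁, hq₁p, hne₁, hagree₁, hsign₁⟩ ⟨q₂, hq₂p, hne₂, hagree₂, hsign₂⟩
    rcases lt_trichotomy q₁ q₂ with h | h | h
    · refine ⟨q₂, hq₂p, ?_, ?_, ?_⟩
      · rw [hagree₁ q₂ h (le_of_lt hq₂p)]; exact hne₂
      · intro k hk hkp
        rw [hagree₁ k (lt_trans h hk) hkp, hagree₂ k hk hkp]
      · have e : η₁ (q₂ + 1) = η₂ (q₂ + 1) :=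
          hagree₁ (q₂ + 1) (lt_trans h (Nat.lt_succ_self _)) hq₂p
        have e2 : η₁ q₂ = η₂ q₂ := hagree₁ q₂ h (le_of_lt hq₂p)
        rcases hsign₂ with ⟨hlt, h1⟩ | ⟨hlt, h1⟩
        · exact Or.inl ⟨e2 ▸ hlt, e ▸ h1⟩
        · exact Or.inr ⟨e2 ▸ hlt, e ▸ h1⟩
    · subst h
      have e : η₁ (q₁ + 1) = η₂ (q₁ + 1) := hagree₁ (q₁ + 1) (Nat.lt_succ_self _) hq₁p
      refine ⟨q₁, hq₁p, ?_, ?_, ?_⟩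
      · rcases hsign₁ with ⟨hlt₁, h1⟩ | ⟨hlt₁, h1⟩ <;>
          rcases hsign₂ with ⟨hlt₂, h2⟩ | ⟨hlt₂, h2⟩
        · exact ne_of_lt (lt_trans hlt₁ hlt₂)
        · rw [← e, h1] at h2; norm_num at h2
        · rw [← e, h1] at h2; norm_num at h2
        · exact ne_of_gt (lt_trans hlt₂ hlt₁)
      · intro k hk hkp
        rw [hagree₁ k hk hkp, hagree₂ k hk hkp]
      · rcases hsign₁ with ⟨hlt₁, h1⟩ | ⟨hlt₁, h1⟩ <;>
          rcases hsign₂ with ⟨hlt₂, h2⟩ | ⟨hlt₂, h2⟩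
        · exact Or.inl ⟨lt_trans hlt₁ hlt₂, h1⟩
        · rw [← e, h1] at h2; norm_num at h2
        · rw [← e, h1] at h2; norm_num at h2
        · exact Or.inr ⟨lt_trans hlt₂ hlt₁, h1⟩
    · refine ⟨q₁, hq₁p, ?_, ?_, ?_⟩
      · rw [← hagree₂ q₁ h (le_of_lt hq₁p)]; exact hne₁
      · intro k hk hkp
        rw [hagree₁ k hk hkp, hagree₂ k (lt_trans h hk) hkp]
      · have e2 : η₂ q₁ = η₃ q₁ := hagree₂ q₁ h (le_of_lt hq₁p)
        rcases hsign₁ with ⟨hlt, h1⟩ | ⟨hlt, h1⟩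
        · exact Or.inl ⟨e2 ▸ hlt, h1⟩
        · exact Or.inr ⟨e2 ▸ hlt, h1⟩
end

section
/- For all integers s ≥ 1, d ≥ 1, and k > i ≥ 1, if N_{k} = s and N_{j} ≤ 4·N_{j+1}²·D_{j+1}^{bit(D_{j+1})+2} for j = k−1,…,i, where D_j = 4^{(4^{k−j}−1)/3}·d^{4^{k−j}}, then N_i ≤ s^{2^{k−i}} · max(2,d)^{(16^{k−i}−1)·bit(d)}. -/
/-- The bit-length function: `bit 0 = 1` and, for `p ≥ 1`, `bit p = k` iff `2^{k-1} ≤ p < 2^k`. -/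
def bit (p : ℕ) : ℕ := if p = 0 then 1 else Nat.log 2 p + 1

/-- The degree bound `D_j = 4^{(4^{k-j}-1)/3} · d^{4^{k-j}}`. -/
def Dbound (k d j : ℕ) : ℕ := 4 ^ ((4 ^ (k - j) - 1) / 3) * d ^ (4 ^ (k - j))

lemma key_step (d f e : ℕ) (hd : 1 ≤ d) (hf : 1 ≤ f) (he : 3 * e + 1 ≤ f) :
    4 * (4 ^ e * d ^ f) ^ (bit (4 ^ e * d ^ f) + 2) ≤
      (max 2 d) ^ ((14 * f ^ 2 + 1) * bit d) := by
  set M := max 2 d with hM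
  set B := bit d with hB
  have hM2 : 2 ≤ M := le_max_left _ _
  have hdM : d ≤ M := le_max_right _ _
  have hB1 : 1 ≤ B := by
    rw [hB, bit, if_neg (by omega)]; omega
  have hdlt : d < 2 ^ B := by
    rw [hB, bit, if_neg (by omega)]
    exact Nat.lt_pow_succ_log_self (by norm_num) d
  set D := 4 ^ e * d ^ f with hDdef
  have hD1 : 1 ≤ D := Nat.one_le_iff_ne_zero.2 (by positivity)
  have hDlt : D < 2 ^ (2 * e + f * B) := by
    have h4 : (4 : ℕ) ^ e = 2 ^ (2 * e) := by
      rw [show (4:ℕ) = 2 ^ 2 by norm_num, ← pow_mul]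
    have hdf : d ^ f < 2 ^ (f * B) := by
      calc d ^ f < (2 ^ B) ^ f := Nat.pow_lt_pow_left hdlt (by omega)
        _ = 2 ^ (f * B) := by rw [← pow_mul, mul_comm]
    calc D = 2 ^ (2 * e) * d ^ f := by rw [hDdef, h4]
      _ < 2 ^ (2 * e) * 2 ^ (f * B) := by
          exact mul_lt_mul_of_pos_left hdf (by positivity)
      _ = 2 ^ (2 * e + f * B) := by rw [← pow_add]
  have hbitD : bit D + 2 ≤ 2 * (f * B) + 2 := by
    have hlog : Nat.log 2 D < 2 * e + f * B := Nat.log_lt_of_lt_pow (by omega) hDlt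
    have : bit D = Nat.log 2 D + 1 := by rw [bit, if_neg (by omega)]
    have hfB : f ≤ f * B := Nat.le_mul_of_pos_right f (by omega)
    omega
  have hDM : D ≤ M ^ (2 * e + f) := by
    calc D ≤ (M ^ 2) ^ e * M ^ f := by
          apply Nat.mul_le_mul
          · exact Nat.pow_le_pow_left (by nlinarith) e
          · exact Nat.pow_le_pow_left hdM f
      _ = M ^ (2 * e + f) := by rw [← pow_mul, ← pow_add]
  calc 4 * D ^ (bit D + 2) ≤ M ^ 2 * (M ^ (2 * e + f)) ^ (2 * (f * B) + 2) := by
        apply Nat.mul_le_mul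
        · nlinarith
        · calc D ^ (bit D + 2) ≤ D ^ (2 * (f * B) + 2) := Nat.pow_le_pow_right hD1 hbitD
            _ ≤ (M ^ (2 * e + f)) ^ (2 * (f * B) + 2) := Nat.pow_le_pow_left hDM _
    _ = M ^ (2 + (2 * e + f) * (2 * (f * B) + 2)) := by rw [← pow_mul, ← pow_add]
    _ ≤ M ^ ((14 * f ^ 2 + 1) * B) := by
        apply Nat.pow_le_pow_right (by omega)
        nlinarith [mul_le_mul_of_nonneg_right (show 3 * e + 1 ≤ f from he) (Nat.zero_le (f * B)),
          mul_le_mul_of_nonneg_left hB1 (Nat.zero_le (f * f)),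
          Nat.one_le_iff_ne_zero.1 hf, mul_le_mul_of_nonneg_right hf (Nat.zero_le B)]

/-- Cardinality bound for the iterated elimination families (arithmetic induction): if `N k = s`
and `N j ≤ 4 · (N (j+1))² · D_{j+1}^{bit(D_{j+1}) + 2}` for `i ≤ j < k`, where
`D_j = 4^{(4^{k-j}-1)/3} · d^{4^{k-j}}`, then
`N i ≤ s^{2^{k-i}} · max(2,d)^{(16^{k-i}-1)·bit d}`. -/
theorem elim_card_bound (s d k i : ℕ) (hs : 1 ≤ s) (hd : 1 ≤ d) (hi : 1 ≤ i) (hik : i < k)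
    (N : ℕ → ℕ) (hk : N k = s)
    (hrec : ∀ j, i ≤ j → j < k →
      N j ≤ 4 * (N (j + 1)) ^ 2 * (Dbound k d (j + 1)) ^ (bit (Dbound k d (j + 1)) + 2)) :
    N i ≤ s ^ (2 ^ (k - i)) * (max 2 d) ^ ((16 ^ (k - i) - 1) * bit d) := by
  set M := max 2 d with hM
  set B := bit d with hB
  have main : ∀ n, n ≤ k - i → N (k - n) ≤ s ^ (2 ^ n) * M ^ ((16 ^ n - 1) * B) := by
    intro n
    induction n with
    | zero => intro _; simp [hk]
    | succ n ih =>
      intro hn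
      have hj : i ≤ k - (n + 1) := by omega
      have hjk : k - (n + 1) < k := by omega
      have hsucc : k - (n + 1) + 1 = k - n := by omega
      have h1 := hrec (k - (n + 1)) hj hjk
      rw [hsucc] at h1
      have h2 := ih (by omega)
      have hkn : k - (k - n) = n := by omega
      have hDb : Dbound k d (k - n) = 4 ^ ((4 ^ n - 1) / 3) * d ^ (4 ^ n) := by
        rw [Dbound, hkn]
      rw [hDb] at h1
      set f : ℕ := 4 ^ n with hf
      set e : ℕ := (4 ^ n - 1) / 3 with hedef
      have hf1 : 1 ≤ f := Nat.one_le_pow _ _ (by norm_num)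
      have he : 3 * e + 1 ≤ f := by
        have := Nat.div_mul_le_self (4 ^ n - 1) 3
        omega
      have hkey := key_step d f e hd hf1 he
      have h16 : 1 ≤ 16 ^ n := Nat.one_le_pow _ _ (by norm_num)
      have hff : f ^ 2 = 16 ^ n := by
        rw [hf, ← pow_mul, show (4:ℕ) = 2^2 by norm_num, ← pow_mul,
          show (16:ℕ) = 2^4 by norm_num, ← pow_mul]
        ring_nf
      calc N (k - (n + 1)) ≤ 4 * N (k - n) ^ 2 * (4 ^ e * d ^ f) ^ (bit (4 ^ e * d ^ f) + 2) := h1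
        _ ≤ 4 * (s ^ 2 ^ n * M ^ ((16 ^ n - 1) * B)) ^ 2
              * (4 ^ e * d ^ f) ^ (bit (4 ^ e * d ^ f) + 2) := by gcongr
        _ = (s ^ 2 ^ n) ^ 2 * (M ^ ((16 ^ n - 1) * B)) ^ 2
              * (4 * (4 ^ e * d ^ f) ^ (bit (4 ^ e * d ^ f) + 2)) := by ring
        _ ≤ (s ^ 2 ^ n) ^ 2 * (M ^ ((16 ^ n - 1) * B)) ^ 2 * M ^ ((14 * f ^ 2 + 1) * B) := by
            gcongr
        _ = s ^ 2 ^ (n + 1) * M ^ ((16 ^ n - 1) * B * 2 + (14 * f ^ 2 + 1) * B) := by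
            rw [← pow_mul, ← pow_mul, mul_assoc, ← pow_add, pow_succ]
            ring_nf
        _ = s ^ 2 ^ (n + 1) * M ^ ((16 ^ (n + 1) - 1) * B) := by
            congr 1
            congr 1
            rw [hff]
            obtain ⟨y, hy⟩ : ∃ y, 16 ^ n = y + 1 := ⟨16 ^ n - 1, by omega⟩
            have h161 : 16 ^ (n + 1) = 16 * (y + 1) := by rw [pow_succ]; omega
            rw [hy, h161]
            have e1 : y + 1 - 1 = y := by omega
            have e2 : 16 * (y + 1) - 1 = 16 * y + 15 := by omega
            rw [e1, e2]
            ring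
  have := main (k - i) (le_refl _)
  rw [show k - (k - i) = i by omega] at this
  exact this
end
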